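/- arXiv:2201.02862 — 4 statements merged into one kernel-verified Lean document; each statement's English description precedes it below -/
import Mathlib

section
/- (Point source / normals to a round sphere solve Euler.) Let c ∈ E, p₀ ∈ ℝ, and let H : ℝ → ℝ be smooth. Define V : ℝ → E → E and p : ℝ → E → ℝ by V t x = (H t / ‖x − c‖³) • (x − c) and p t x = p₀ − (H t)² / (2 ‖x − c‖⁴) + (deriv H t) / ‖x − c‖. Then (V, p) solves the incompressible Euler equations on the open set U = {x ∈ E | x ≠ c}. -/
open scoped RealInnerProductSpace

noncomputable section

abbrev E3 := EuclideanSpace ℝ (Fin 3)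

/-- The divergence of a vector field `W` at `x`: the trace of its derivative. -/
def vecDiv (W : E3 → E3) (x : E3) : ℝ :=
  LinearMap.trace ℝ E3 (fderiv ℝ W x : E3 →ₗ[ℝ] E3)

/-- `(V, p)` is a smooth solution of the incompressible Euler equations on `U`. -/
def SolvesEuler (U : Set E3) (V : ℝ → E3 → E3) (p : ℝ → E3 → ℝ) : Prop :=
  ContDiffOn ℝ (⊤ : ℕ∞) (fun q : ℝ × E3 => V q.1 q.2) (Set.univ ×ˢ U) ∧
  ContDiffOn ℝ (⊤ : ℕ∞) (fun q : ℝ × E3 => p q.1 q.2) (Set.univ ×ˢ U) ∧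
  ∀ t : ℝ, ∀ x ∈ U,
    deriv (fun s => V s x) t + fderiv ℝ (V t) x (V t x) = - gradient (p t) x ∧
    vecDiv (V t) x = 0

lemma hasFDerivAt_norm_sub (c x : E3) (hx : x ≠ c) :
    HasFDerivAt (fun y : E3 => ‖y - c‖) (‖x - c‖⁻¹ • innerSL ℝ (x - c)) x := by
  have hu : x - c ≠ 0 := sub_ne_zero.2 hx
  have h1 : HasFDerivAt (fun y : E3 => y - c) (ContinuousLinearMap.id ℝ E3) x :=
    (hasFDerivAt_id x).sub_const c
  have h2 := h1.norm_sq
  have hne : ‖x - c‖ ^ 2 ≠ 0 := pow_ne_zero 2 (norm_ne_zero_iff.2 hu)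
  have h3 := (Real.hasDerivAt_sqrt hne).comp_hasFDerivAt x h2
  have heq : (Real.sqrt ∘ fun y : E3 => ‖y - c‖ ^ 2) = fun y : E3 => ‖y - c‖ := by
    funext y; simp only [Function.comp_apply]; rw [Real.sqrt_sq (norm_nonneg _)]
  rw [heq] at h3
  have hD : (1 / (2 * Real.sqrt (‖x - c‖ ^ 2))) •
      (2 • ((innerSL ℝ (x - c)).comp (ContinuousLinearMap.id ℝ E3)))
      = ‖x - c‖⁻¹ • innerSL ℝ (x - c) := by
    rw [Real.sqrt_sq (norm_nonneg _)]
    ext v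
    simp only [ContinuousLinearMap.smul_apply, ContinuousLinearMap.comp_apply,
      ContinuousLinearMap.id_apply, two_smul, ContinuousLinearMap.add_apply,
      innerSL_apply_apply, smul_eq_mul]
    ring
  rwa [hD] at h3

lemma hasFDerivAt_radial (c x : E3) (hx : x ≠ c) (a : ℝ) (m : ℕ) :
    HasFDerivAt (fun y : E3 => a / ‖y - c‖ ^ (m + 1))
      ((-(m + 1 : ℝ) * a / ‖x - c‖ ^ (m + 3)) • innerSL ℝ (x - c)) x := by
  have hr : ‖x - c‖ ≠ 0 := norm_ne_zero_iff.2 (sub_ne_zero.2 hx)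
  have hd : HasDerivAt (fun s : ℝ => a / s ^ (m + 1))
      ((0 * ‖x - c‖ ^ (m + 1) - a * ((m + 1 : ℕ) * ‖x - c‖ ^ m)) / (‖x - c‖ ^ (m + 1)) ^ 2)
      ‖x - c‖ :=
    (hasDerivAt_const _ a).div (hasDerivAt_pow (m + 1) _) (pow_ne_zero _ hr)
  have h3 := hd.comp_hasFDerivAt x (hasFDerivAt_norm_sub c x hx)
  have hsc : (((0 * ‖x - c‖ ^ (m + 1) - a * ((m + 1 : ℕ) * ‖x - c‖ ^ m)) / (‖x - c‖ ^ (m + 1)) ^ 2) •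
      (‖x - c‖⁻¹ • innerSL ℝ (x - c)))
      = (-(m + 1 : ℝ) * a / ‖x - c‖ ^ (m + 3)) • innerSL ℝ (x - c) := by
    rw [smul_smul]
    congr 1
    field_simp
    push_cast
    ring
  rwa [hsc] at h3

lemma trace_smulRight' (f : E3 →ₗ[ℝ] ℝ) (v : E3) :
    LinearMap.trace ℝ E3 (LinearMap.smulRight f v) = f v := by
  have h1 : LinearMap.smulRight f v = (LinearMap.toSpanSingleton ℝ E3 v).comp f := by
    ext w; simp [LinearMap.toSpanSingleton_apply]
  rw [h1, LinearMap.trace_comp_comm']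
  have h2 : f.comp (LinearMap.toSpanSingleton ℝ E3 v) = f v • LinearMap.id := by
    ext
    simp [LinearMap.toSpanSingleton_apply, mul_comm]
  rw [h2, map_smul, LinearMap.trace_id]
  simp

/-- The point source flow generated by the normals to round spheres centred at `c`
solves the incompressible Euler equations away from `c`. -/
theorem sphere_normals_solve_euler (c : E3) (p₀ : ℝ) (H : ℝ → ℝ) (hH : ContDiff ℝ (⊤ : ℕ∞) H) :
    SolvesEuler {x : E3 | x ≠ c}
      (fun t x => (H t / ‖x - c‖ ^ 3) • (x - c))
      (fun t x => p₀ - (H t) ^ 2 / (2 * ‖x - c‖ ^ 4) + deriv H t / ‖x - c‖) := by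
  have hH' : ContDiff ℝ (⊤ : ℕ∞) (deriv H) := by
    exact (contDiff_infty_iff_deriv.mp hH).2
  refine ⟨?_, ?_, ?_⟩
  · -- smoothness of V
    intro q hq
    have hx : q.2 ≠ c := hq.2
    have hsub : ContDiffAt ℝ (⊤ : ℕ∞) (fun q : ℝ × E3 => q.2 - c) q :=
      (contDiff_snd.sub contDiff_const).contDiffAt
    have hn : ContDiffAt ℝ (⊤ : ℕ∞) (fun q : ℝ × E3 => ‖q.2 - c‖) q :=
      hsub.norm ℝ (sub_ne_zero.2 hx)
    have hr : ‖q.2 - c‖ ≠ 0 := norm_ne_zero_iff.2 (sub_ne_zero.2 hx)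
    exact ((((hH.comp contDiff_fst).contDiffAt).div (hn.pow 3)
      (pow_ne_zero 3 hr)).smul hsub).contDiffWithinAt
  · -- smoothness of p
    intro q hq
    have hx : q.2 ≠ c := hq.2
    have hn : ContDiffAt ℝ (⊤ : ℕ∞) (fun q : ℝ × E3 => ‖q.2 - c‖) q :=
      ((contDiff_snd.sub contDiff_const).contDiffAt).norm ℝ (sub_ne_zero.2 hx)
    have hr : ‖q.2 - c‖ ≠ 0 := norm_ne_zero_iff.2 (sub_ne_zero.2 hx)
    have h1 : ContDiffAt ℝ (⊤ : ℕ∞) (fun q : ℝ × E3 => p₀ - (H q.1) ^ 2 / (2 * ‖q.2 - c‖ ^ 4)) q :=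
      contDiffAt_const.sub
        ((((hH.comp contDiff_fst).contDiffAt).pow 2).div
          (contDiffAt_const.mul (hn.pow 4)) (by positivity))
    have h2 : ContDiffAt ℝ (⊤ : ℕ∞) (fun q : ℝ × E3 => deriv H q.1 / ‖q.2 - c‖) q :=
      ((hH'.comp contDiff_fst).contDiffAt).div hn hr
    exact (h1.add h2).contDiffWithinAt
  · -- the PDE
    intro t x hx
    have hx' : x ≠ c := hx
    have hu : x - c ≠ 0 := sub_ne_zero.2 hx'
    have hr : ‖x - c‖ ≠ 0 := norm_ne_zero_iff.2 hu
    -- time derivative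
    have hVt : HasDerivAt (fun s => (H s / ‖x - c‖ ^ 3) • (x - c))
        ((deriv H t / ‖x - c‖ ^ 3) • (x - c)) t :=
      (((hH.differentiable (by simp) t).hasDerivAt).div_const _).smul_const (x - c)
    -- spatial derivative of V t
    have hs := hasFDerivAt_radial c x hx' (H t) 2
    norm_num only at hs
    have hD : HasFDerivAt (fun y : E3 => (H t / ‖y - c‖ ^ 3) • (y - c))
        ((H t / ‖x - c‖ ^ 3) • ContinuousLinearMap.id ℝ E3 +
          ((-3 * H t / ‖x - c‖ ^ 5) • innerSL ℝ (x - c)).smulRight (x - c)) x :=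
      hs.smul ((hasFDerivAt_id x).sub_const c)
    -- gradient of p t
    have h1 := hasFDerivAt_radial c x hx' (H t ^ 2 / 2) 3
    norm_num only at h1
    have h2 := hasFDerivAt_radial c x hx' (deriv H t) 0
    norm_num only [pow_one] at h2
    have hp : HasFDerivAt (fun y : E3 =>
        p₀ - H t ^ 2 / (2 * ‖y - c‖ ^ 4) + deriv H t / ‖y - c‖)
        (((0 : E3 →L[ℝ] ℝ) - (-4 * (H t ^ 2 / 2) / ‖x - c‖ ^ 6) • innerSL ℝ (x - c)) +
          (-1 * deriv H t / ‖x - c‖ ^ 3) • innerSL ℝ (x - c)) x := by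
      have := ((hasFDerivAt_const p₀ x).sub h1).add h2
      simpa only [div_div, Pi.sub_def, Pi.add_def] using this
    have htd : (InnerProductSpace.toDual ℝ E3)
        ((2 * H t ^ 2 / ‖x - c‖ ^ 6 - deriv H t / ‖x - c‖ ^ 3) • (x - c))
        = (((0 : E3 →L[ℝ] ℝ) - (-4 * (H t ^ 2 / 2) / ‖x - c‖ ^ 6) • innerSL ℝ (x - c)) +
          (-1 * deriv H t / ‖x - c‖ ^ 3) • innerSL ℝ (x - c)) := by
      ext v
      simp only [InnerProductSpace.toDual_apply_apply, ContinuousLinearMap.add_apply,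
        ContinuousLinearMap.sub_apply, ContinuousLinearMap.zero_apply,
        ContinuousLinearMap.smul_apply, innerSL_apply_apply, smul_eq_mul,
        real_inner_smul_left]
      ring
    have hg : HasGradientAt (fun y : E3 =>
        p₀ - H t ^ 2 / (2 * ‖y - c‖ ^ 4) + deriv H t / ‖y - c‖)
        ((2 * H t ^ 2 / ‖x - c‖ ^ 6 - deriv H t / ‖x - c‖ ^ 3) • (x - c)) x := by
      rw [hasGradientAt_iff_hasFDerivAt, htd]; exact hp
    constructor
    · rw [hVt.deriv, hD.fderiv, hg.gradient]
      simp only [ContinuousLinearMap.add_apply, ContinuousLinearMap.smul_apply,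
        ContinuousLinearMap.id_apply, ContinuousLinearMap.smulRight_apply,
        innerSL_apply_apply, real_inner_smul_right, real_inner_self_eq_norm_sq, smul_eq_mul,
        smul_smul]
      match_scalars
      all_goals (field_simp [hr]; ring)
    · rw [vecDiv, hD.fderiv]
      have hco : (((H t / ‖x - c‖ ^ 3) • ContinuousLinearMap.id ℝ E3 +
          ((-3 * H t / ‖x - c‖ ^ 5) • innerSL ℝ (x - c)).smulRight (x - c) :
            E3 →L[ℝ] E3) : E3 →ₗ[ℝ] E3)
          = (H t / ‖x - c‖ ^ 3) • LinearMap.id +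
            LinearMap.smulRight (((-3 * H t / ‖x - c‖ ^ 5) • innerSL ℝ (x - c) :
              E3 →L[ℝ] ℝ) : E3 →ₗ[ℝ] ℝ) (x - c) := by
        ext v
        simp
      rw [hco, map_add, map_smul, LinearMap.trace_id, trace_smulRight']
      simp only [ContinuousLinearMap.coe_coe, ContinuousLinearMap.smul_apply,
        innerSL_apply_apply, smul_eq_mul, real_inner_self_eq_norm_sq,
        finrank_euclideanSpace, Fintype.card_fin]
      field_simp [hr]
      ring
end
end

section
/- (Line source / normals to a circular cylinder solve Euler.) Let a ∈ E, let w ∈ E be a unit vector, let p₀ ∈ ℝ, and let H : ℝ → ℝ be smooth. Write ρ x = (x − a) − ⟪x − a, w⟫ • w for the component of x − a orthogonal to the axis {a + s • w}. Define V t x = (H t / ‖ρ x‖²) • ρ x and p t x = p₀ − (H t)² / (2 ‖ρ x‖²) − (deriv H t) * Real.log ‖ρ x‖. Then (V, p) solves the incompressible Euler equations on the open set U = {x ∈ E | ρ x ≠ 0}. -/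
open scoped RealInnerProductSpace

noncomputable section

namespace CylAux

/-- Orthogonal projection onto the orthogonal complement of `w`, as a CLM. -/
noncomputable def P (w : E3) : E3 →L[ℝ] E3 :=
  ContinuousLinearMap.id ℝ E3 - (innerSL ℝ w).smulRight w

lemma P_apply (w v : E3) : P w v = v - ⟪w, v⟫ • w := rfl

lemma inner_w_P (w : E3) (hw : ‖w‖ = 1) (v : E3) : ⟪w, P w v⟫ = 0 := by
  rw [P_apply, inner_sub_right, real_inner_smul_right, real_inner_self_eq_norm_sq, hw]
  ring

lemma P_idem (w : E3) (hw : ‖w‖ = 1) (v : E3) : P w (P w v) = P w v := by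
  rw [P_apply w (P w v), inner_w_P w hw v]
  simp

lemma inner_P_of_orth (w : E3) {u : E3} (hu : ⟪w, u⟫ = 0) (v : E3) :
    ⟪u, P w v⟫ = ⟪u, v⟫ := by
  have h2 : ⟪u, w⟫ = 0 := by rw [real_inner_comm]; exact hu
  rw [P_apply, inner_sub_right, real_inner_smul_right, h2]
  ring

/-- Trace of the rank-one map `v ↦ ⟪b, v⟫ • c`. -/
lemma trace_rankOne (b c : E3) :
    LinearMap.trace ℝ E3 (((innerSL ℝ b).smulRight c : E3 →L[ℝ] E3) : E3 →ₗ[ℝ] E3)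
      = ⟪b, c⟫ := by
  classical
  rw [LinearMap.trace_eq_matrix_trace ℝ (PiLp.basisFun 2 ℝ (Fin 3))]
  rw [Matrix.trace]
  simp only [Matrix.diag, LinearMap.toMatrix_apply, PiLp.basisFun_repr,
    PiLp.basisFun_apply]
  rw [PiLp.inner_apply]
  simp only [ContinuousLinearMap.coe_coe, ContinuousLinearMap.smulRight_apply,
    innerSL_apply_apply, PiLp.smul_apply, smul_eq_mul]
  congr 1
  ext i
  rw [PiLp.inner_apply]
  simp [Pi.single_apply, mul_comm]

lemma trace_P (w : E3) (hw : ‖w‖ = 1) :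
    LinearMap.trace ℝ E3 ((P w : E3 →L[ℝ] E3) : E3 →ₗ[ℝ] E3) = 2 := by
  have : ((P w : E3 →L[ℝ] E3) : E3 →ₗ[ℝ] E3)
      = (LinearMap.id : E3 →ₗ[ℝ] E3)
        - (((innerSL ℝ w).smulRight w : E3 →L[ℝ] E3) : E3 →ₗ[ℝ] E3) := rfl
  rw [this, map_sub, LinearMap.trace_id, trace_rankOne,
    real_inner_self_eq_norm_sq, hw]
  norm_num

end CylAux

set_option maxHeartbeats 2000000 in
open CylAux in
/-- The line source flow generated by the normals to circular cylinders with axis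
`{a + s • w}` solves the incompressible Euler equations away from the axis.
Here `ρ x = (x - a) - ⟪x - a, w⟫ • w` is the component of `x - a` orthogonal to the axis. -/
theorem cylinder_normals_solve_euler (a w : E3) (hw : ‖w‖ = 1) (p₀ : ℝ)
    (H : ℝ → ℝ) (hH : ContDiff ℝ (⊤ : ℕ∞) H) :
    SolvesEuler {x : E3 | (x - a) - ⟪x - a, w⟫ • w ≠ 0}
      (fun t x => (H t / ‖(x - a) - ⟪x - a, w⟫ • w‖ ^ 2) • ((x - a) - ⟪x - a, w⟫ • w))
      (fun t x => p₀ - (H t) ^ 2 / (2 * ‖(x - a) - ⟪x - a, w⟫ • w‖ ^ 2)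
                    - deriv H t * Real.log ‖(x - a) - ⟪x - a, w⟫ • w‖) := by
  have key : ∀ x : E3, (x - a) - ⟪x - a, w⟫ • w = P w (x - a) := by
    intro x; rw [P_apply, real_inner_comm]
  simp only [key]
  -- basic smoothness ingredients
  have hρcd : ContDiff ℝ (⊤ : ℕ∞) (fun q : ℝ × E3 => P w (q.2 - a)) :=
    (P w).contDiff.comp (contDiff_snd.sub contDiff_const)
  have hncd : ContDiff ℝ (⊤ : ℕ∞) (fun q : ℝ × E3 => ‖P w (q.2 - a)‖ ^ 2) := hρcd.norm_sq ℝ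
  have hHcd : ContDiff ℝ (⊤ : ℕ∞) (fun q : ℝ × E3 => H q.1) := hH.comp contDiff_fst
  have hH' : ContDiff ℝ (⊤ : ℕ∞) (deriv H) := by
    exact (contDiff_infty_iff_deriv.mp hH).2
  have hne : ∀ q : ℝ × E3, q ∈ (Set.univ ×ˢ {x : E3 | P w (x - a) ≠ 0} : Set (ℝ × E3)) →
      ‖P w (q.2 - a)‖ ^ 2 ≠ 0 := by
    intro q hq
    exact pow_ne_zero 2 (norm_ne_zero_iff.2 hq.2)
  refine ⟨?_, ?_, ?_⟩
  · exact ((hHcd.contDiffOn.div hncd.contDiffOn hne).smul hρcd.contDiffOn)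
  · have hlog : ∀ x : E3, Real.log ‖P w (x - a)‖ = Real.log (‖P w (x - a)‖ ^ 2) / 2 := by
      intro x; rw [Real.log_pow]; push_cast; ring
    simp only [hlog]
    refine ContDiffOn.sub (ContDiffOn.sub contDiffOn_const ?_) ?_
    · exact (hHcd.pow 2).contDiffOn.div
        ((contDiff_const.mul hncd).contDiffOn)
        (by intro q hq; simpa using hne q hq)
    · exact ((hH'.comp contDiff_fst).contDiffOn.mul
        ((hncd.contDiffOn.log hne).div_const 2))
  · intro t x hx
    set u : E3 := P w (x - a) with hu_def
    have hu : u ≠ 0 := hx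
    have hwu : ⟪w, u⟫ = 0 := inner_w_P w hw (x - a)
    have hPu : P w u = u := P_idem w hw (x - a)
    set n : ℝ := ‖u‖ ^ 2 with hn_def
    have hnpos : 0 < n := by rw [hn_def]; exact pow_pos (norm_pos_iff.2 hu) 2
    have hn0 : n ≠ 0 := hnpos.ne'
    -- derivative of ρ
    have hρd : HasFDerivAt (fun y : E3 => P w (y - a)) (P w) x := by
      have h0 : HasFDerivAt (fun y : E3 => y - a) (ContinuousLinearMap.id ℝ E3) x :=
        (hasFDerivAt_id x).sub_const a
      have := (P w).hasFDerivAt.comp x h0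
      rw [ContinuousLinearMap.comp_id] at this
      exact this
    -- derivative of n(y) = ‖ρ y‖²
    have hnd : HasFDerivAt (fun y : E3 => ‖P w (y - a)‖ ^ 2)
        ((2 : ℝ) • innerSL ℝ u) x := by
      have h1 := (hρd.inner ℝ hρd)
      have heq : ((fderivInnerCLM ℝ (u, u)).comp ((P w).prod (P w)))
          = (2 : ℝ) • innerSL ℝ u := by
        ext v
        simp only [ContinuousLinearMap.comp_apply, ContinuousLinearMap.prod_apply,
          fderivInnerCLM_apply, ContinuousLinearMap.smul_apply, innerSL_apply_apply,
          smul_eq_mul]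
        have e1 := inner_P_of_orth w hwu v
        have e2 : ⟪P w v, u⟫ = ⟪u, P w v⟫ := real_inner_comm _ _
        rw [e1, e2, e1]
        ring
      have h2 : HasFDerivAt (fun y : E3 => ⟪P w (y - a), P w (y - a)⟫)
          ((2 : ℝ) • innerSL ℝ u) x := by rw [← heq]; exact h1
      have : (fun y : E3 => ‖P w (y - a)‖ ^ 2) = fun y : E3 => ⟪P w (y - a), P w (y - a)⟫ := by
        funext y; rw [real_inner_self_eq_norm_sq]
      rw [this]; exact h2
    -- derivative of y ↦ (n y)⁻¹
    have hinvd : HasFDerivAt (fun y : E3 => (‖P w (y - a)‖ ^ 2)⁻¹)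
        ((-(n ^ 2)⁻¹) • ((2 : ℝ) • innerSL ℝ u)) x :=
      (hasDerivAt_inv hn0).comp_hasFDerivAt x hnd
    -- derivative of the velocity field at time t
    set R : E3 →L[ℝ] E3 := (innerSL ℝ u).smulRight u with hR_def
    have hVd : HasFDerivAt (fun y : E3 => (H t / ‖P w (y - a)‖ ^ 2) • P w (y - a))
        ((H t / n) • P w + (-(2 * H t / n ^ 2)) • R) x := by
      have hc : HasFDerivAt (fun y : E3 => H t / ‖P w (y - a)‖ ^ 2)
          ((H t) • ((-(n ^ 2)⁻¹) • ((2 : ℝ) • innerSL ℝ u))) x := by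
        have := hinvd.const_mul (H t)
        simpa [div_eq_mul_inv] using this
      have h := hc.smul hρd
      have heq : (H t / n) • P w + ((H t) • ((-(n ^ 2)⁻¹) • ((2 : ℝ) • innerSL ℝ u))).smulRight u
          = (H t / n) • P w + (-(2 * H t / n ^ 2)) • R := by
        congr 1
        ext v
        simp only [ContinuousLinearMap.smulRight_apply, ContinuousLinearMap.smul_apply,
          innerSL_apply_apply, smul_eq_mul, hR_def]
        rw [smul_smul]
        ring_nf
      rw [← heq]
      exact h
    -- time derivative
    have htd : HasDerivAt (fun s => (H s / ‖P w (x - a)‖ ^ 2) • P w (x - a))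
        ((deriv H t / n) • u) t := by
      have : HasDerivAt (fun s => H s / ‖P w (x - a)‖ ^ 2) (deriv H t / n) t :=
        ((hH.differentiable (by simp) t).hasDerivAt).div_const _
      exact this.smul_const _
    -- gradient of the pressure
    have hgrad : HasGradientAt
        (fun y : E3 => p₀ - H t ^ 2 / (2 * ‖P w (y - a)‖ ^ 2)
          - deriv H t * Real.log ‖P w (y - a)‖)
        (((H t) ^ 2 / n ^ 2 - deriv H t / n) • u) x := by
      rw [hasGradientAt_iff_hasFDerivAt]
      have h2 : HasFDerivAt (fun y : E3 => H t ^ 2 / (2 * ‖P w (y - a)‖ ^ 2))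
          ((H t ^ 2 / 2) • ((-(n ^ 2)⁻¹) • ((2 : ℝ) • innerSL ℝ u))) x := by
        have := hinvd.const_mul (H t ^ 2 / 2)
        have hfun : (fun y : E3 => H t ^ 2 / 2 * (‖P w (y - a)‖ ^ 2)⁻¹)
            = fun y : E3 => H t ^ 2 / (2 * ‖P w (y - a)‖ ^ 2) := by
          funext y; ring
        rw [← hfun]
        simpa [smul_smul] using this
      have h3 : HasFDerivAt (fun y : E3 => deriv H t * Real.log ‖P w (y - a)‖)
          ((deriv H t / 2) • (n⁻¹ • ((2 : ℝ) • innerSL ℝ u))) x := by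
        have hlogd : HasFDerivAt (fun y : E3 => Real.log (‖P w (y - a)‖ ^ 2))
            (n⁻¹ • ((2 : ℝ) • innerSL ℝ u)) x := by
          have := (Real.hasDerivAt_log hn0).comp_hasFDerivAt x hnd; exact this
        have := hlogd.const_mul (deriv H t / 2)
        have hfun : (fun y : E3 => deriv H t / 2 * Real.log (‖P w (y - a)‖ ^ 2))
            = fun y : E3 => deriv H t * Real.log ‖P w (y - a)‖ := by
          funext y; rw [Real.log_pow]; push_cast; ring
        rw [← hfun]
        simpa [smul_smul] using this
      have h := ((hasFDerivAt_const p₀ x).sub h2).sub h3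
      have heq : (0 : E3 →L[ℝ] ℝ) - (H t ^ 2 / 2) • ((-(n ^ 2)⁻¹) • ((2 : ℝ) • innerSL ℝ u))
            - (deriv H t / 2) • (n⁻¹ • ((2 : ℝ) • innerSL ℝ u))
          = (InnerProductSpace.toDual ℝ E3) (((H t) ^ 2 / n ^ 2 - deriv H t / n) • u) := by
        ext v
        simp only [ContinuousLinearMap.sub_apply, ContinuousLinearMap.zero_apply,
          ContinuousLinearMap.smul_apply, innerSL_apply_apply, smul_eq_mul,
          InnerProductSpace.toDual_apply_apply, inner_smul_left, RCLike.inner_apply,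
          conj_trivial]
        field_simp
        ring
      rw [← heq]
      exact h
    constructor
    · -- momentum equation
      rw [htd.deriv, hVd.fderiv, hgrad.gradient]
      beta_reduce
      have hVx : (H t / ‖P w (x - a)‖ ^ 2) • P w (x - a) = (H t / n) • u := rfl
      rw [hVx]
      simp only [ContinuousLinearMap.add_apply, ContinuousLinearMap.smul_apply,
        map_smul, hPu, hR_def, ContinuousLinearMap.smulRight_apply, innerSL_apply_apply,
        real_inner_smul_right, real_inner_self_eq_norm_sq, ← hn_def]
      match_scalars
      field_simp
      ring
    · -- divergence-free
      unfold vecDiv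
      rw [hVd.fderiv]
      have hcoe : (((H t / n) • P w + (-(2 * H t / n ^ 2)) • R : E3 →L[ℝ] E3) : E3 →ₗ[ℝ] E3)
          = (H t / n) • ((P w : E3 →L[ℝ] E3) : E3 →ₗ[ℝ] E3)
            + (-(2 * H t / n ^ 2)) • ((R : E3 →L[ℝ] E3) : E3 →ₗ[ℝ] E3) := rfl
      rw [hcoe, map_add, map_smul, map_smul, trace_P w hw, hR_def, trace_rankOne,
        real_inner_self_eq_norm_sq, ← hn_def]
      field_simp
      have hnn : n * n⁻¹ = 1 := mul_inv_cancel₀ hn0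
      linear_combination (-(2 * H t * n⁻¹)) * hnn
end
end

section
/- (Geodesic equation on the sphere in stereographic coordinates.) Let I ⊆ ℝ be a nonempty open interval and let ξ : I → ℂ be smooth with deriv ξ u ≠ 0 for all u ∈ I. Suppose that for all u ∈ I, (1 + |ξ u|²) * (conj (deriv ξ u) * deriv (deriv ξ) u − deriv ξ u * conj (deriv (deriv ξ) u)) − 2 * (conj (ξ u) * deriv ξ u − ξ u * conj (deriv ξ u)) * deriv ξ u * conj (deriv ξ u) = 0. Then the curve u ↦ n(ξ u) on the unit sphere lies in a great circle: there exists a nonzero vector a ∈ ℝ³ such that ⟨a, n(ξ u)⟩ = 0 for all u ∈ I, where n(ζ) ∈ ℂ × ℝ ≅ ℝ³ is given by n(ζ) = (2ζ / (1 + |ζ|²), (1 − |ζ|²) / (1 + |ζ|²)). -/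
noncomputable section

open Complex

/-- The inverse of stereographic projection from the North pole, as a map into
`ℝ³ ≅ ℂ × ℝ`. -/
def dirC (ζ : ℂ) : ℂ × ℝ :=
  (2 * ζ / ((1 + ‖ζ‖ ^ 2 : ℝ) : ℂ), (1 - ‖ζ‖ ^ 2) / (1 + ‖ζ‖ ^ 2))

lemma reco (a b : ℂ) : (((a * (starRingEnd ℂ) b + b * (starRingEnd ℂ) a).re : ℝ) : ℂ)
    = a * (starRingEnd ℂ) b + b * (starRingEnd ℂ) a := by
  have h : b * (starRingEnd ℂ) a = (starRingEnd ℂ) (a * (starRingEnd ℂ) b) := by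
    rw [map_mul, Complex.conj_conj]; ring
  rw [h, Complex.add_conj]; push_cast; simp

lemma reco2 (z : ℂ) : (((z * (starRingEnd ℂ) z).re : ℝ) : ℂ) = z * (starRingEnd ℂ) z := by
  rw [Complex.mul_conj]; simp

lemma habs' (Z : ℂ) : ((1 + ‖Z‖ ^ 2 : ℝ) : ℂ) = 1 + Z * (starRingEnd ℂ) Z := by
  rw [Complex.ofReal_add, Complex.ofReal_one, Complex.sq_norm, Complex.mul_conj]

lemma key1 (Z V W : ℂ) (hV : V ≠ 0)
    (hE : ((1 + ‖Z‖ ^ 2 : ℝ) : ℂ) * ((starRingEnd ℂ) V * W - V * (starRingEnd ℂ) W)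
      - 2 * ((starRingEnd ℂ) Z * V - Z * (starRingEnd ℂ) V) * V * (starRingEnd ℂ) V = 0) :
    (0 : ℂ) =
    (Complex.I * (W + 2 * Z * V * (starRingEnd ℂ) V + Z ^ 2 * (starRingEnd ℂ) W) *
        ((Real.sqrt ((V * (starRingEnd ℂ) V).re) * (1 + (Z * (starRingEnd ℂ) Z).re) : ℝ) : ℂ) -
      Complex.I * (V + Z ^ 2 * (starRingEnd ℂ) V) *
        (((1 / (2 * Real.sqrt ((V * (starRingEnd ℂ) V).re)) *
            ((W * (starRingEnd ℂ) V + V * (starRingEnd ℂ) W).re) * (1 + (Z * (starRingEnd ℂ) Z).re)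
          + Real.sqrt ((V * (starRingEnd ℂ) V).re) *
            ((V * (starRingEnd ℂ) Z + Z * (starRingEnd ℂ) V).re) : ℝ) : ℂ))) /
      ((Real.sqrt ((V * (starRingEnd ℂ) V).re) * (1 + (Z * (starRingEnd ℂ) Z).re) : ℝ) : ℂ) ^ 2 := by
  have hE' : (1 + Z * (starRingEnd ℂ) Z) * ((starRingEnd ℂ) V * W - V * (starRingEnd ℂ) W)
      - 2 * ((starRingEnd ℂ) Z * V - Z * (starRingEnd ℂ) V) * V * (starRingEnd ℂ) V = 0 := by
    rw [← habs' Z]; exact hE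
  have hT0 : 0 < (V * (starRingEnd ℂ) V).re := by
    rw [Complex.mul_conj]; exact_mod_cast Complex.normSq_pos.mpr hV
  set s : ℝ := Real.sqrt ((V * (starRingEnd ℂ) V).re) with hs
  have hs0 : 0 < s := Real.sqrt_pos.mpr hT0
  have hS2 : ((s : ℝ) : ℂ) ^ 2 = V * (starRingEnd ℂ) V := by
    rw [← Complex.ofReal_pow, Real.sq_sqrt hT0.le]; exact reco2 V
  have hSne : ((s : ℝ) : ℂ) ≠ 0 := Complex.ofReal_ne_zero.mpr hs0.ne'
  symm
  rw [div_eq_zero_iff]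
  left
  push_cast
  rw [reco W V, reco V Z, reco2 Z]
  have main : 2 * Complex.I * (W + 2 * Z * V * (starRingEnd ℂ) V + Z ^ 2 * (starRingEnd ℂ) W)
        * (1 + Z * (starRingEnd ℂ) Z) * (V * (starRingEnd ℂ) V)
      - Complex.I * (V + Z ^ 2 * (starRingEnd ℂ) V) *
        ((W * (starRingEnd ℂ) V + V * (starRingEnd ℂ) W) * (1 + Z * (starRingEnd ℂ) Z)
          + 2 * (V * (starRingEnd ℂ) V) * (V * (starRingEnd ℂ) Z + Z * (starRingEnd ℂ) V)) = 0 := by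
    linear_combination (Complex.I * (V - Z ^ 2 * (starRingEnd ℂ) V)) * hE'
  have expand : Complex.I * (W + 2 * Z * V * (starRingEnd ℂ) V + Z ^ 2 * (starRingEnd ℂ) W) *
        ((s : ℂ) * (1 + Z * (starRingEnd ℂ) Z)) -
      Complex.I * (V + Z ^ 2 * (starRingEnd ℂ) V) *
        (1 / (2 * (s : ℂ)) * (W * (starRingEnd ℂ) V + V * (starRingEnd ℂ) W)
            * (1 + Z * (starRingEnd ℂ) Z)
          + (s : ℂ) * (V * (starRingEnd ℂ) Z + Z * (starRingEnd ℂ) V))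
      = (1 / (2 * (s : ℂ))) *
        (2 * Complex.I * (W + 2 * Z * V * (starRingEnd ℂ) V + Z ^ 2 * (starRingEnd ℂ) W)
            * (1 + Z * (starRingEnd ℂ) Z) * (V * (starRingEnd ℂ) V)
          - Complex.I * (V + Z ^ 2 * (starRingEnd ℂ) V) *
            ((W * (starRingEnd ℂ) V + V * (starRingEnd ℂ) W) * (1 + Z * (starRingEnd ℂ) Z)
              + 2 * (V * (starRingEnd ℂ) V) * (V * (starRingEnd ℂ) Z + Z * (starRingEnd ℂ) V))) := by
    rw [← hS2]
    field_simp
  rw [show ((s : ℝ) : ℂ) * ((1:ℂ) + Z * (starRingEnd ℂ) Z) = (s : ℂ) * (1 + Z * (starRingEnd ℂ) Z) from rfl] -- noop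
  calc _ = (1 / (2 * (s : ℂ))) * _ := expand
    _ = 0 := by rw [main, mul_zero]

lemma imco (z : ℂ) : ((z.im : ℝ) : ℂ) = (z - (starRingEnd ℂ) z) / (2 * Complex.I) := by
  rw [Complex.sub_conj]; push_cast; field_simp

lemma key2 (Z V W : ℂ) (hV : V ≠ 0)
    (hE : ((1 + ‖Z‖ ^ 2 : ℝ) : ℂ) * ((starRingEnd ℂ) V * W - V * (starRingEnd ℂ) W)
      - 2 * ((starRingEnd ℂ) Z * V - Z * (starRingEnd ℂ) V) * V * (starRingEnd ℂ) V = 0) :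
    (0 : ℝ) =
    (2 * (((starRingEnd ℂ) V * V + (starRingEnd ℂ) Z * W).im)
        * (Real.sqrt ((V * (starRingEnd ℂ) V).re) * (1 + (Z * (starRingEnd ℂ) Z).re)) -
      2 * (((starRingEnd ℂ) Z * V).im) *
        (1 / (2 * Real.sqrt ((V * (starRingEnd ℂ) V).re)) *
            ((W * (starRingEnd ℂ) V + V * (starRingEnd ℂ) W).re) * (1 + (Z * (starRingEnd ℂ) Z).re)
          + Real.sqrt ((V * (starRingEnd ℂ) V).re) *
            ((V * (starRingEnd ℂ) Z + Z * (starRingEnd ℂ) V).re))) /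
      (Real.sqrt ((V * (starRingEnd ℂ) V).re) * (1 + (Z * (starRingEnd ℂ) Z).re)) ^ 2 := by
  have hE' : (1 + Z * (starRingEnd ℂ) Z) * ((starRingEnd ℂ) V * W - V * (starRingEnd ℂ) W)
      - 2 * ((starRingEnd ℂ) Z * V - Z * (starRingEnd ℂ) V) * V * (starRingEnd ℂ) V = 0 := by
    rw [← habs' Z]; exact hE
  have hT0 : 0 < (V * (starRingEnd ℂ) V).re := by
    rw [Complex.mul_conj]; exact_mod_cast Complex.normSq_pos.mpr hV
  set s : ℝ := Real.sqrt ((V * (starRingEnd ℂ) V).re) with hs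
  have hs0 : 0 < s := Real.sqrt_pos.mpr hT0
  have hS2 : ((s : ℝ) : ℂ) ^ 2 = V * (starRingEnd ℂ) V := by
    rw [← Complex.ofReal_pow, Real.sq_sqrt hT0.le]; exact reco2 V
  have hSne : ((s : ℝ) : ℂ) ≠ 0 := Complex.ofReal_ne_zero.mpr hs0.ne'
  symm
  rw [div_eq_zero_iff]
  left
  rw [← Complex.ofReal_eq_zero]
  push_cast
  rw [imco, imco, reco W V, reco V Z, reco2 Z]
  simp only [map_add, map_mul, Complex.conj_conj]
  have main : 2 * ((starRingEnd ℂ) Z * W - Z * (starRingEnd ℂ) W)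
        * (1 + Z * (starRingEnd ℂ) Z) * (V * (starRingEnd ℂ) V)
      - ((starRingEnd ℂ) Z * V - Z * (starRingEnd ℂ) V) *
        ((W * (starRingEnd ℂ) V + V * (starRingEnd ℂ) W) * (1 + Z * (starRingEnd ℂ) Z)
          + 2 * (V * (starRingEnd ℂ) V) * (V * (starRingEnd ℂ) Z + Z * (starRingEnd ℂ) V)) = 0 := by
    linear_combination ((starRingEnd ℂ) Z * V + Z * (starRingEnd ℂ) V) * hE'
  have expand : 2 * (((starRingEnd ℂ) V * V + (starRingEnd ℂ) Z * W
          - (V * (starRingEnd ℂ) V + Z * (starRingEnd ℂ) W)) / (2 * Complex.I))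
        * ((s : ℂ) * (1 + Z * (starRingEnd ℂ) Z)) -
      2 * ((((starRingEnd ℂ) Z * V - Z * (starRingEnd ℂ) V)) / (2 * Complex.I)) *
        (1 / (2 * (s : ℂ)) * (W * (starRingEnd ℂ) V + V * (starRingEnd ℂ) W)
            * (1 + Z * (starRingEnd ℂ) Z)
          + (s : ℂ) * (V * (starRingEnd ℂ) Z + Z * (starRingEnd ℂ) V))
      = (1 / (2 * (s : ℂ) * Complex.I)) *
        (2 * ((starRingEnd ℂ) Z * W - Z * (starRingEnd ℂ) W)
            * (1 + Z * (starRingEnd ℂ) Z) * (V * (starRingEnd ℂ) V)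
          - ((starRingEnd ℂ) Z * V - Z * (starRingEnd ℂ) V) *
            ((W * (starRingEnd ℂ) V + V * (starRingEnd ℂ) W) * (1 + Z * (starRingEnd ℂ) Z)
              + 2 * (V * (starRingEnd ℂ) V) * (V * (starRingEnd ℂ) Z + Z * (starRingEnd ℂ) V))) := by
    rw [← hS2]
    field_simp
    ring_nf
    linear_combination (-(2 * ((s : ℝ) : ℂ) ^ 2) * (1 + (starRingEnd ℂ) Z * Z)) * hS2
  calc _ = (1 / (2 * (s : ℂ) * Complex.I)) * _ := expand
    _ = 0 := by rw [main, mul_zero]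
set_option maxHeartbeats 1000000 in
lemma ortho (Z V : ℂ) (Rr : ℝ) (hR : Rr ≠ 0) :
    ((starRingEnd ℂ) (Complex.I * (V + Z ^ 2 * (starRingEnd ℂ) V) / (Rr : ℂ))
        * (2 * Z / ((1 + ‖Z‖ ^ 2 : ℝ) : ℂ))).re
      + (2 * (((starRingEnd ℂ) Z * V).im) / Rr) * ((1 - ‖Z‖ ^ 2) / (1 + ‖Z‖ ^ 2)) = 0 := by
  have habs : ((‖Z‖ : ℝ) : ℂ) ^ 2 = Z * (starRingEnd ℂ) Z := by
    rw [← Complex.ofReal_pow, Complex.sq_norm]; exact_mod_cast (Complex.mul_conj Z).symm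
  have hρ0 : (1 : ℂ) + Z * (starRingEnd ℂ) Z ≠ 0 := by
    rw [← habs, ← Complex.ofReal_pow]
    have : (0:ℝ) < 1 + ‖Z‖ ^ 2 := by positivity
    intro h
    rw [show (1 : ℂ) = ((1:ℝ):ℂ) from rfl, ← Complex.ofReal_add] at h
    exact this.ne' (Complex.ofReal_eq_zero.mp h)
  have hR0 : (Rr : ℂ) ≠ 0 := Complex.ofReal_ne_zero.mpr hR
  rw [← Complex.ofReal_inj]
  push_cast
  rw [show ∀ w : ℂ, ((w.re : ℝ) : ℂ) = (w + (starRingEnd ℂ) w) / 2 from fun w => by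
        rw [Complex.add_conj]; push_cast; ring,
      show ∀ w : ℂ, ((w.im : ℝ) : ℂ) = (w - (starRingEnd ℂ) w) / (2 * Complex.I) from fun w => by
        rw [Complex.sub_conj]; push_cast; field_simp]
  simp only [map_mul, map_div₀, map_add, map_sub, map_pow, map_ofNat, map_one, map_neg, Complex.conj_conj,
    Complex.conj_I, Complex.conj_ofReal]
  rw [habs]
  field_simp
  ring_nf
  simp only [Complex.I_sq]
  ring

lemma nzlemma (Z V : ℂ) (hV : V ≠ 0)
    (h1 : V + Z ^ 2 * (starRingEnd ℂ) V = 0) (h2 : ((starRingEnd ℂ) Z * V).im = 0) : False := by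
  obtain ⟨x, y⟩ := Z
  obtain ⟨p, q⟩ := V
  simp [Complex.ext_iff, Complex.mul_re, Complex.mul_im, pow_two] at h1 h2
  apply hV
  simp [Complex.ext_iff]
  constructor <;> nlinarith [h1.1, h1.2, h2, sq_nonneg (x*p+y*q), sq_nonneg p, sq_nonneg q]

/-- A curve in stereographic coordinates satisfying the geodesic equation on the 2-sphere
traces out (part of) a great circle: the corresponding unit vectors are all orthogonal to a
fixed nonzero vector `a ∈ ℝ³ ≅ ℂ × ℝ` (the Euclidean inner product on `ℂ × ℝ` being
`⟨(a₁,a₂),(b₁,b₂)⟩ = Re (conj a₁ * b₁) + a₂ * b₂`). -/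
theorem geodesic_equation_great_circle
    (I : Set ℝ) (hI : IsOpen I) (hne : I.Nonempty) (hconn : I.OrdConnected)
    (ξ : ℝ → ℂ) (hξ : ContDiffOn ℝ (⊤ : ℕ∞) ξ I)
    (hd : ∀ u ∈ I, deriv ξ u ≠ 0)
    (hgeo : ∀ u ∈ I,
      ((1 + ‖ξ u‖ ^ 2 : ℝ) : ℂ) *
        ((starRingEnd ℂ) (deriv ξ u) * deriv (deriv ξ) u
          - deriv ξ u * (starRingEnd ℂ) (deriv (deriv ξ) u))
      - 2 * ((starRingEnd ℂ) (ξ u) * deriv ξ u - ξ u * (starRingEnd ℂ) (deriv ξ u))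
          * deriv ξ u * (starRingEnd ℂ) (deriv ξ u) = 0) :
    ∃ a : ℂ × ℝ, a ≠ 0 ∧ ∀ u ∈ I,
      ((starRingEnd ℂ) a.1 * (dirC (ξ u)).1).re + a.2 * (dirC (ξ u)).2 = 0 := by
  obtain ⟨u₀, hu₀⟩ := hne
  have hconv : Convex ℝ I := convex_iff_ordConnected.mpr hconn
  set T : ℝ → ℝ := fun u => (deriv ξ u * (starRingEnd ℂ) (deriv ξ u)).re with hT
  set ρ : ℝ → ℝ := fun u => 1 + (ξ u * (starRingEnd ℂ) (ξ u)).re with hρ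
  set R : ℝ → ℝ := fun u => Real.sqrt (T u) * ρ u with hR
  set F₁ : ℝ → ℂ := fun u =>
    Complex.I * (deriv ξ u + (ξ u) ^ 2 * (starRingEnd ℂ) (deriv ξ u)) / ((R u : ℝ) : ℂ) with hF₁
  set F₂ : ℝ → ℝ := fun u => 2 * ((starRingEnd ℂ) (ξ u) * deriv ξ u).im / R u with hF₂
  -- basic positivity
  have hTval : ∀ u, T u = Complex.normSq (deriv ξ u) := by
    intro u; rw [hT]; simp [Complex.mul_conj]
  have hρval : ∀ u, ρ u = 1 + Complex.normSq (ξ u) := by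
    intro u; rw [hρ]; simp [Complex.mul_conj]
  have hTpos : ∀ u ∈ I, 0 < T u := by
    intro u hu; rw [hTval]; exact Complex.normSq_pos.mpr (hd u hu)
  have hρpos : ∀ u, 0 < ρ u := by
    intro u; rw [hρval]; have := Complex.normSq_nonneg (ξ u); linarith
  have hRpos : ∀ u ∈ I, 0 < R u := by
    intro u hu; exact mul_pos (Real.sqrt_pos.mpr (hTpos u hu)) (hρpos u)
  -- differentiability
  have hz : ∀ u ∈ I, HasDerivAt ξ (deriv ξ u) u := by
    intro u hu
    exact (((hξ.contDiffAt (hI.mem_nhds hu)).of_le (by simp) :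
      ContDiffAt ℝ 1 ξ u).differentiableAt one_ne_zero).hasDerivAt
  have hv : ∀ u ∈ I, HasDerivAt (deriv ξ) (deriv (deriv ξ) u) u := by
    intro u hu
    have h2 : ContDiffOn ℝ 2 ξ I := hξ.of_le (WithTop.coe_le_coe.mpr (le_top : (2:ℕ∞) ≤ ⊤))
    have h1 : ContDiffOn ℝ 1 (deriv ξ) I := h2.deriv_of_isOpen hI (by norm_num)
    exact (((h1.contDiffAt (hI.mem_nhds hu))).differentiableAt one_ne_zero).hasDerivAt
  -- derivative of T, ρ, sqrt T, R
  have hzc : ∀ u ∈ I, HasDerivAt (fun u => (starRingEnd ℂ) (ξ u))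
      ((starRingEnd ℂ) (deriv ξ u)) u := by
    intro u hu
    exact (hz u hu).star
  have hvc : ∀ u ∈ I, HasDerivAt (fun u => (starRingEnd ℂ) (deriv ξ u))
      ((starRingEnd ℂ) (deriv (deriv ξ) u)) u := by
    intro u hu
    exact (hv u hu).star
  have hTd : ∀ u ∈ I, HasDerivAt T
      ((deriv (deriv ξ) u * (starRingEnd ℂ) (deriv ξ u)
        + deriv ξ u * (starRingEnd ℂ) (deriv (deriv ξ) u)).re) u := by
    intro u hu
    exact Complex.reCLM.hasFDerivAt.comp_hasDerivAt u ((hv u hu).mul (hvc u hu))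
  have hρd : ∀ u ∈ I, HasDerivAt ρ
      ((deriv ξ u * (starRingEnd ℂ) (ξ u) + ξ u * (starRingEnd ℂ) (deriv ξ u)).re) u := by
    intro u hu
    have := Complex.reCLM.hasFDerivAt.comp_hasDerivAt u ((hz u hu).mul (hzc u hu))
    have h2 := (hasDerivAt_const u (1:ℝ)).add this
    rw [zero_add] at h2
    exact h2
  have hsd : ∀ u ∈ I, HasDerivAt (fun u => Real.sqrt (T u))
      (1 / (2 * Real.sqrt (T u)) * ((deriv (deriv ξ) u * (starRingEnd ℂ) (deriv ξ u)
        + deriv ξ u * (starRingEnd ℂ) (deriv (deriv ξ) u)).re)) u := by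
    intro u hu
    exact (Real.hasDerivAt_sqrt (hTpos u hu).ne').comp u (hTd u hu)
  have hRd : ∀ u ∈ I, HasDerivAt R
      (1 / (2 * Real.sqrt (T u)) * ((deriv (deriv ξ) u * (starRingEnd ℂ) (deriv ξ u)
          + deriv ξ u * (starRingEnd ℂ) (deriv (deriv ξ) u)).re) * ρ u
        + Real.sqrt (T u) * ((deriv ξ u * (starRingEnd ℂ) (ξ u)
          + ξ u * (starRingEnd ℂ) (deriv ξ u)).re)) u := by
    intro u hu
    exact (hsd u hu).mul (hρd u hu)
  -- F₁ has derivative 0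
  have hF₁d : ∀ u ∈ I, HasDerivAt F₁ 0 u := by
    intro u hu
    have hNum : HasDerivAt (fun u => Complex.I * (deriv ξ u + (ξ u) ^ 2 * (starRingEnd ℂ) (deriv ξ u)))
        (Complex.I * (deriv (deriv ξ) u + (2 * ξ u * deriv ξ u) * (starRingEnd ℂ) (deriv ξ u)
          + (ξ u) ^ 2 * (starRingEnd ℂ) (deriv (deriv ξ) u))) u := by
      have hzsq : HasDerivAt (fun u => (ξ u) ^ 2) (2 * ξ u * deriv ξ u) u := by
        have := ((hz u hu).mul (hz u hu)).congr_deriv (by ring :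
          deriv ξ u * ξ u + ξ u * deriv ξ u = 2 * ξ u * deriv ξ u)
        simp only [pow_two]
        exact this
      have := ((hv u hu).add ((hzsq.mul (hvc u hu))))
      refine (this.const_mul Complex.I).congr_deriv ?_
      ring
    have hDen : HasDerivAt (fun u => ((R u : ℝ) : ℂ))
        ((1 / (2 * Real.sqrt (T u)) * ((deriv (deriv ξ) u * (starRingEnd ℂ) (deriv ξ u)
          + deriv ξ u * (starRingEnd ℂ) (deriv (deriv ξ) u)).re) * ρ u
        + Real.sqrt (T u) * ((deriv ξ u * (starRingEnd ℂ) (ξ u)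
          + ξ u * (starRingEnd ℂ) (deriv ξ u)).re) : ℝ)) u :=
      HasDerivAt.ofReal_comp (hRd u hu)
    have hRne : ((R u : ℝ) : ℂ) ≠ 0 := by
      exact_mod_cast (hRpos u hu).ne'
    have hQ := hNum.div hDen hRne
    exact hQ.congr_deriv (key1 (ξ u) (deriv ξ u) (deriv (deriv ξ) u) (hd u hu) (hgeo u hu)).symm
  -- F₂ has derivative 0
  have hF₂d : ∀ u ∈ I, HasDerivAt F₂ 0 u := by
    intro u hu
    have hNum : HasDerivAt (fun u => 2 * ((starRingEnd ℂ) (ξ u) * deriv ξ u).im)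
        (2 * (((starRingEnd ℂ) (deriv ξ u) * deriv ξ u
          + (starRingEnd ℂ) (ξ u) * deriv (deriv ξ) u).im)) u := by
      have := Complex.imCLM.hasFDerivAt.comp_hasDerivAt u ((hzc u hu).mul (hv u hu))
      exact this.const_mul 2
    have hQ := hNum.div (hRd u hu) (hRpos u hu).ne'
    exact hQ.congr_deriv (key2 (ξ u) (deriv ξ u) (deriv (deriv ξ) u) (hd u hu) (hgeo u hu)).symm
  -- constancy
  have hC1 : ∀ u ∈ I, F₁ u = F₁ u₀ := by
    intro u hu
    refine hconv.is_const_of_fderivWithin_eq_zero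
      (fun x hx => (hF₁d x hx).differentiableAt.differentiableWithinAt) ?_ hu hu₀
    intro x hx
    rw [fderivWithin_of_isOpen hI hx, (hF₁d x hx).hasFDerivAt.fderiv]
    ext
    simp
  have hC2 : ∀ u ∈ I, F₂ u = F₂ u₀ := by
    intro u hu
    refine hconv.is_const_of_fderivWithin_eq_zero
      (fun x hx => (hF₂d x hx).differentiableAt.differentiableWithinAt) ?_ hu hu₀
    intro x hx
    rw [fderivWithin_of_isOpen hI hx, (hF₂d x hx).hasFDerivAt.fderiv]
    ext
    simp
  -- conclusion
  refine ⟨(F₁ u₀, F₂ u₀), ?_, ?_⟩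
  · intro h
    rw [Prod.ext_iff] at h
    obtain ⟨h1, h2⟩ := h
    simp only [hF₁, Prod.fst_zero] at h1
    simp only [hF₂, Prod.snd_zero] at h2
    have hRne : ((R u₀ : ℝ) : ℂ) ≠ 0 := by exact_mod_cast (hRpos u₀ hu₀).ne'
    rw [div_eq_zero_iff] at h1
    rcases h1 with h1 | h1
    · rcases mul_eq_zero.mp h1 with h1 | h1
      · exact Complex.I_ne_zero h1
      · exact nzlemma (ξ u₀) (deriv ξ u₀) (hd u₀ hu₀) h1 (by
          have h2' := h2
          rw [div_eq_zero_iff] at h2'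
          rcases h2' with h2' | h2'
          · linarith [h2']
          · exact absurd h2' (hRpos u₀ hu₀).ne')
    · exact hRne h1
  · intro u hu
    rw [← hC1 u hu, ← hC2 u hu]
    simp only [hF₁, hF₂, dirC]
    exact ortho (ξ u) (deriv ξ u) (R u) (hRpos u hu).ne'
end
end

section
/- (Solution of the linear ODE arising in the rank one case.) Let β : ℝ → ℝ be a twice continuously differentiable function satisfying (1 + u²)² * deriv (deriv β) u + 2 * u * (1 + u²) * deriv β u + 4 * β u = 0 for all u ∈ ℝ. Then there exist constants b₀, b₁ ∈ ℝ such that β u = (b₀ + 2 * b₁ * u − b₀ * u²) / (1 + u²) for all u ∈ ℝ. -/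
/-! Under `u = tan θ` the equation becomes `f'' + 4 f = 0` for `f θ = β (tan θ)`. Written in `u`,
its first integrals `(2 f cos 2θ - f' sin 2θ) / 2` and `(f' cos 2θ + 2 f sin 2θ) / 2` are
`firstIntegral₀` and `firstIntegral₁`: their derivatives are multiples of the left-hand side of the
equation, and `f = I₀ cos 2θ + I₁ sin 2θ` with `cos 2θ = (1 - u²)/(1 + u²)`, `sin 2θ = 2u/(1 + u²)`. -/

noncomputable section

def firstIntegral₀ (f f' : ℝ → ℝ) (u : ℝ) : ℝ :=
  (1 - u ^ 2) / (1 + u ^ 2) * f u - u * f' u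

def firstIntegral₁ (f f' : ℝ → ℝ) (u : ℝ) : ℝ :=
  (1 - u ^ 2) / 2 * f' u + 2 * u / (1 + u ^ 2) * f u

section

variable {f f' : ℝ → ℝ} {f'' u : ℝ}

lemma hasDerivAt_firstIntegral₀ (hf : HasDerivAt f (f' u) u) (hf' : HasDerivAt f' f'' u) :
    HasDerivAt (firstIntegral₀ f f')
      (-u / (1 + u ^ 2) ^ 2 *
        ((1 + u ^ 2) ^ 2 * f'' + 2 * u * (1 + u ^ 2) * f' u + 4 * f u)) u := by
  have hne : (1 + u ^ 2) ≠ 0 := by positivity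
  have hc :
      HasDerivAt (fun u : ℝ => (1 - u ^ 2) / (1 + u ^ 2)) (-4 * u / (1 + u ^ 2) ^ 2) u := by
    refine ((hasDerivAt_pow 2 u |>.const_sub 1).div
      (hasDerivAt_pow 2 u |>.const_add 1) hne).congr_deriv ?_
    field_simp
    ring
  refine ((hc.mul hf).sub ((hasDerivAt_id' (x := u)).mul hf')).congr_deriv ?_
  field_simp
  ring

lemma hasDerivAt_firstIntegral₁ (hf : HasDerivAt f (f' u) u) (hf' : HasDerivAt f' f'' u) :
    HasDerivAt (firstIntegral₁ f f')
      ((1 - u ^ 2) / (2 * (1 + u ^ 2) ^ 2) *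
        ((1 + u ^ 2) ^ 2 * f'' + 2 * u * (1 + u ^ 2) * f' u + 4 * f u)) u := by
  have hne : (1 + u ^ 2) ≠ 0 := by positivity
  have hs :
      HasDerivAt (fun u : ℝ => 2 * u / (1 + u ^ 2)) (2 * (1 - u ^ 2) / (1 + u ^ 2) ^ 2) u := by
    refine (((hasDerivAt_id' (x := u)).const_mul 2).div
      (hasDerivAt_pow 2 u |>.const_add 1) hne).congr_deriv ?_
    field_simp
    ring
  have hc : HasDerivAt (fun u : ℝ => (1 - u ^ 2) / 2) (-u) u := by
    refine ((hasDerivAt_pow 2 u |>.const_sub 1).div_const 2).congr_deriv ?_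
    ring
  refine ((hc.mul hf').add (hs.mul hf)).congr_deriv ?_
  field_simp
  ring

end

lemma eq_firstIntegral_combination (f f' : ℝ → ℝ) (u : ℝ) :
    f u = (firstIntegral₀ f f' u + 2 * firstIntegral₁ f f' u * u - firstIntegral₀ f f' u * u ^ 2)
      / (1 + u ^ 2) := by
  have hne : (1 + u ^ 2) ≠ 0 := by positivity
  unfold firstIntegral₀ firstIntegral₁
  field_simp
  ring

lemma eq_of_hasDerivAt_zero {F : ℝ → ℝ} (hF : ∀ u, HasDerivAt F 0 u) (u v : ℝ) : F u = F v :=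
  is_const_of_deriv_eq_zero (fun u => (hF u).differentiableAt) (fun u => (hF u).deriv) u v

end

/-- The general solution of the linear ODE
`(1 + u²)² β'' + 2u(1 + u²) β' + 4β = 0`
arising in the rank one case is `β u = (b₀ + 2 b₁ u − b₀ u²) / (1 + u²)`. -/
theorem rank_one_ode_solution
    (β : ℝ → ℝ) (hβ : ContDiff ℝ 2 β)
    (hode : ∀ u : ℝ,
      (1 + u ^ 2) ^ 2 * deriv (deriv β) u + 2 * u * (1 + u ^ 2) * deriv β u + 4 * β u = 0) :
    ∃ b₀ b₁ : ℝ, ∀ u : ℝ, β u = (b₀ + 2 * b₁ * u - b₀ * u ^ 2) / (1 + u ^ 2) := by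
  have hβ₁ (u : ℝ) : HasDerivAt β (deriv β u) u :=
    (hβ.differentiable (by norm_num) u).hasDerivAt
  have hβ₂ (u : ℝ) : HasDerivAt (deriv β) (deriv (deriv β) u) u :=
    (hβ.differentiable_deriv_two u).hasDerivAt
  have hI₀ (u : ℝ) : HasDerivAt (firstIntegral₀ β (deriv β)) 0 u := by
    simpa [hode u] using hasDerivAt_firstIntegral₀ (hβ₁ u) (hβ₂ u)
  have hI₁ (u : ℝ) : HasDerivAt (firstIntegral₁ β (deriv β)) 0 u := by
    simpa [hode u] using hasDerivAt_firstIntegral₁ (hβ₁ u) (hβ₂ u)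
  refine ⟨firstIntegral₀ β (deriv β) 0, firstIntegral₁ β (deriv β) 0, fun u => ?_⟩
  rw [← eq_of_hasDerivAt_zero hI₀ u 0, ← eq_of_hasDerivAt_zero hI₁ u 0]
  exact eq_firstIntegral_combination β (deriv β) u
end
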